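/- arXiv:nlin/0201055 — 4 statements merged into one kernel-verified Lean document; each statement's English description precedes it below -/
import Mathlib

section
/- Liouville-type identity: for a finite set of pairwise distinct (mod period) complex numbers q₁, ..., q_M (with M = 2|K| + 2), the sum over i of the products ∏_{k ≠ i} v(q_i - q_k), where v(q) = sinh(νq/2 + γ)/sinh(νq/2), equals sinh(γ·M)/sinh(γ). In particular this sum is independent of the positions q_i. -/
/-!
With `x i = exp (ν q i)` and `t = exp (-2γ)`, each factor equals
`exp γ * (x i - t x k) / (x i - x k)`, so the claim reduces to the rational identity
`(1 - t) * ∑ i, ∏ k ≠ i, (x i - t x k) / (x i - x k) = 1 - t ^ M` for distinct nonzero `x i`.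
For it, `R = ∏ k, (X - t x k) - t ^ M ∏ k, (X - x k)` has no constant term, coefficient
`1 - t ^ M` in degree `M` and none above, and `R (x i) = (1 - t) x i ∏ k ≠ i, (x i - t x k)`.
Lagrange interpolation of `R / X` at the nodes `x i` expresses its top coefficient `1 - t ^ M`
as exactly the sum above. Finally `exp γ ^ (M - 1) (1 - t ^ M) / (1 - t) = sinh (M γ) / sinh γ`.
-/

open Finset Polynomial Lagrange

theorem Lagrange.one_sub_mul_sum_prod_sub_mul_div_sub {F ι : Type*} [Field F] [DecidableEq ι]
    (s : Finset ι) (x : ι → F) (t : F)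
    (hx0 : ∀ i ∈ s, x i ≠ 0) (hx : Set.InjOn x s) :
    (1 - t) * ∑ i ∈ s, ∏ k ∈ s.erase i, (x i - t * x k) / (x i - x k) = 1 - t ^ #s := by
  rcases s.eq_empty_or_nonempty with rfl | hs
  · simp
  set R : F[X] := nodal s (fun k => t * x k) - C (t ^ #s) * nodal s x
  have hR0 : R.coeff 0 = 0 := by
    simp only [R, coeff_zero_eq_eval_zero, eval_sub, eval_mul, eval_C, eval_nodal, zero_sub]
    rw [sub_eq_zero, ← prod_const, ← prod_mul_distrib]
    exact prod_congr rfl fun _ _ => by ring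
  have hRdeg : R.natDegree ≤ #s :=
    (natDegree_sub_le _ _).trans <|
      max_le natDegree_nodal.le ((natDegree_C_mul_le _ _).trans natDegree_nodal.le)
  have hRcoeff : R.coeff #s = 1 - t ^ #s := by
    have hmonic : ∀ v : ι → F, (nodal s v).coeff #s = 1 := fun v => by
      rw [← natDegree_nodal (v := v)]; exact nodal_monic.coeff_natDegree
    rw [coeff_sub, coeff_C_mul, hmonic, hmonic, mul_one]
  have hRx : ∀ i ∈ s, R.eval (x i) = x i * ((1 - t) * ∏ k ∈ s.erase i, (x i - t * x k)) := by
    intro i hi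
    rw [eval_sub, eval_mul, eval_C, eval_nodal_at_node hi, mul_zero, sub_zero, eval_nodal,
      ← mul_prod_erase s _ hi]
    ring
  have hXS : R = X * R.divX := by simpa [hR0] using (X_mul_divX_add R).symm
  have hSdeg : R.divX.degree < #s := by
    have hle : R.divX.natDegree ≤ #s - 1 := by
      rw [natDegree_divX_eq_natDegree_tsub_one]; exact Nat.sub_le_sub_right hRdeg 1
    exact (degree_le_of_natDegree_le hle).trans_lt
      (by exact_mod_cast Nat.sub_lt hs.card_pos one_pos)
  calc (1 - t) * ∑ i ∈ s, ∏ k ∈ s.erase i, (x i - t * x k) / (x i - x k)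
      = ∑ i ∈ s, R.divX.eval (x i) / ∏ k ∈ s.erase i, (x i - x k) := by
        rw [mul_sum]
        refine sum_congr rfl fun i hi => ?_
        have := hRx i hi
        rw [hXS, eval_mul, eval_X] at this
        rw [prod_div_distrib, mul_div_assoc', mul_left_cancel₀ (hx0 i hi) this.symm]
    _ = R.divX.coeff (#s - 1) := (coeff_eq_sum hx hSdeg).symm
    _ = 1 - t ^ #s := by rw [coeff_divX, Nat.sub_add_cancel hs.card_pos, hRcoeff]

namespace Complex

theorem exp_sub_exp (a b : ℂ) : exp a - exp b = 2 * exp ((a + b) / 2) * sinh ((a - b) / 2) := by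
  have ha : exp a = exp ((a + b) / 2) * exp ((a - b) / 2) := by rw [← exp_add]; ring_nf
  have hb : exp b = exp ((a + b) / 2) * exp (-((a - b) / 2)) := by rw [← exp_add]; ring_nf
  rw [sinh, ha, hb]
  ring

theorem sinh_half_sub_add_div_sinh_half_sub (u v γ : ℂ) :
    sinh ((u - v) / 2 + γ) / sinh ((u - v) / 2) =
      exp γ * ((exp u - exp (-(2 * γ)) * exp v) / (exp u - exp v)) := by
  have hnum : exp γ * (exp u - exp (-(2 * γ)) * exp v) = exp (u + γ) - exp (v - γ) := by
    rw [exp_add, show v - γ = -(2 * γ) + v + γ by ring, exp_add, exp_add]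
    ring
  rw [mul_div_assoc', hnum, exp_sub_exp, exp_sub_exp,
    show (u + γ + (v - γ)) / 2 = (u + v) / 2 by ring,
    show (u + γ - (v - γ)) / 2 = (u - v) / 2 + γ by ring,
    mul_div_mul_left _ _ (mul_ne_zero two_ne_zero (exp_ne_zero _))]

theorem exp_pow_mul_geom_div_eq_sinh_div_sinh (γ : ℂ) (n : ℕ) :
    exp γ ^ (n - 1) * ((1 - exp (-(2 * γ)) ^ n) / (1 - exp (-(2 * γ)))) =
      sinh (n * γ) / sinh γ := by
  rcases n with _ | n
  · simp
  have hden : 1 - exp (-(2 * γ)) = 2 * exp (-γ) * sinh γ := by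
    rw [← exp_zero, exp_sub_exp]; ring_nf
  have hnum : 1 - exp (-(2 * γ)) ^ (n + 1) =
      2 * exp (-((n + 1 : ℕ) * γ)) * sinh ((n + 1 : ℕ) * γ) := by
    rw [← exp_nat_mul, ← exp_zero, exp_sub_exp]; ring_nf
  have hexp : exp γ ^ n * exp (-((n + 1 : ℕ) * γ)) = exp (-γ) := by
    rw [← exp_nat_mul, ← exp_add]; push_cast; ring_nf
  calc exp γ ^ (n + 1 - 1) * ((1 - exp (-(2 * γ)) ^ (n + 1)) / (1 - exp (-(2 * γ))))
      = 2 * exp (-γ) * sinh ((n + 1 : ℕ) * γ) / (2 * exp (-γ) * sinh γ) := by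
        rw [hden, hnum, Nat.add_sub_cancel, ← hexp]; ring
    _ = sinh ((n + 1 : ℕ) * γ) / sinh γ :=
        mul_div_mul_left _ _ (mul_ne_zero two_ne_zero (exp_ne_zero _))

end Complex

open Complex

/-- Liouville-type identity
`∑_i ∏_{k ≠ i} v(q_i - q_k) = sinh(Mγ)/sinh γ` for `v(q) = sinh(νq/2+γ)/sinh(νq/2)`. -/
theorem liouville_identity (γ ν : ℂ) (hγ : Complex.sinh γ ≠ 0) (M : ℕ)
    (q : Fin M → ℂ)
    (hq : ∀ i k : Fin M, i ≠ k → Complex.sinh (ν * (q i - q k) / 2) ≠ 0) :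
    ∑ i : Fin M, ∏ k ∈ Finset.univ.erase i,
        Complex.sinh (ν * (q i - q k) / 2 + γ) / Complex.sinh (ν * (q i - q k) / 2) =
      Complex.sinh ((M : ℂ) * γ) / Complex.sinh γ := by
  set x : Fin M → ℂ := fun i => exp (ν * q i)
  set t : ℂ := exp (-(2 * γ))
  have hx : Set.InjOn x (univ : Finset (Fin M)) := fun i _ k _ hik => by
    by_contra hne
    apply hq i k hne
    simpa [x, exp_sub_exp, mul_sub, exp_ne_zero] using sub_eq_zero.mpr hik
  have ht : 1 - t ≠ 0 := by
    rw [← exp_zero, exp_sub_exp]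
    simpa [exp_ne_zero] using hγ
  have hsum := one_sub_mul_sum_prod_sub_mul_div_sub univ x t (fun i _ => exp_ne_zero _) hx
  rw [card_univ, Fintype.card_fin] at hsum
  calc _ = ∑ i : Fin M, exp γ ^ (M - 1) * ∏ k ∈ univ.erase i, (x i - t * x k) / (x i - x k) := by
        refine sum_congr rfl fun i _ => ?_
        simp only [mul_sub, sinh_half_sub_add_div_sinh_half_sub, prod_mul_distrib, prod_const,
          card_erase_of_mem (mem_univ i), card_univ, Fintype.card_fin, x, t]
    _ = exp γ ^ (M - 1) * ((1 - t ^ M) / (1 - t)) := by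
        rw [← mul_sum, ← hsum, mul_div_cancel_left₀ _ ht]
    _ = _ := exp_pow_mul_geom_div_eq_sinh_div_sinh γ M
end

section
/- In the rational case, the Liouville-type identity degenerates: for pairwise distinct real numbers q₁, ..., q_M and v(q) = (q + g)/q, the sum ∑_{i=1}^M ∏_{k≠i} (q_i - q_k + g)/(q_i - q_k) equals M (i.e., the limit of sinh(Mγ)/sinh(γ) as γ → 0 after rescaling). -/
/-!
For `g ≠ 0` the polynomial `P = ∏ₖ (X - (qₖ - g)) - ∏ₖ (X - qₖ)` has degree `< M`, its
`X^(M-1)`-coefficient is `M g`, and `P(qᵢ) = g ∏_{k ≠ i} (qᵢ - qₖ + g)`. Lagrange interpolation at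
the nodes `qᵢ` writes that coefficient as `∑ᵢ P(qᵢ) / ∏_{k ≠ i} (qᵢ - qₖ)`, i.e. `g` times the sum.
-/

open Polynomial Finset

namespace Lagrange

section CommRing

variable {R : Type*} [CommRing R] {ι : Type*} {s : Finset ι}

theorem degree_nodal_sub_nodal_lt [Nontrivial R] (v w : ι → R) :
    (nodal s w - nodal s v).degree < #s := by
  rw [← degree_nodal (v := w)]
  exact degree_sub_lt_left (by rw [degree_nodal, degree_nodal]) nodal_ne_zero
    (by rw [nodal_monic.leadingCoeff, nodal_monic.leadingCoeff])

theorem coeff_nodal_sub_const_sub_nodal (v : ι → R) (g : R) :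
    (nodal s (fun j => v j - g) - nodal s v).coeff (#s - 1) = #s * g := by
  rcases s.eq_empty_or_nonempty with rfl | hs
  · simp
  rw [coeff_sub, nodal_eq, nodal_eq, prod_X_sub_C_coeff_card_pred _ _ hs.card_pos,
    prod_X_sub_C_coeff_card_pred _ _ hs.card_pos, sum_sub_distrib]
  simp

theorem eval_nodal_sub_const_at_node [DecidableEq ι] (v : ι → R) (g : R) {i : ι} (hi : i ∈ s) :
    (nodal s (fun j => v j - g)).eval (v i) = g * ∏ j ∈ s.erase i, (v i - v j + g) := by
  rw [eval_nodal, ← mul_prod_erase s _ hi]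
  simp only [sub_sub_cancel, ← sub_add]

end CommRing

variable {F : Type*} [Field F] {ι : Type*} [DecidableEq ι] {s : Finset ι} {v : ι → F}

theorem sum_prod_sub_add_div_sub (hvs : Set.InjOn v s) (g : F) :
    ∑ i ∈ s, ∏ j ∈ s.erase i, (v i - v j + g) / (v i - v j) = #s := by
  have hdiff_ne {i j : ι} (hi : i ∈ s) (hj : j ∈ s.erase i) : v i - v j ≠ 0 :=
    sub_ne_zero.2 fun h => (mem_erase.1 hj).1 (hvs (mem_erase.1 hj).2 hi h.symm)
  rcases eq_or_ne g 0 with rfl | hg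
  · rw [sum_congr rfl fun i hi => prod_eq_one fun j hj => by simp [hdiff_ne hi hj]]
    simp
  refine mul_left_cancel₀ hg ?_
  calc g * ∑ i ∈ s, ∏ j ∈ s.erase i, (v i - v j + g) / (v i - v j)
      = ∑ i ∈ s, (nodal s (fun j => v j - g) - nodal s v).eval (v i) /
          ∏ j ∈ s.erase i, (v i - v j) := by
        rw [mul_sum]
        refine sum_congr rfl fun i hi => ?_
        rw [eval_sub, eval_nodal_sub_const_at_node v g hi, eval_nodal_at_node hi, sub_zero,
          prod_div_distrib, mul_div_assoc]
    _ = (nodal s (fun j => v j - g) - nodal s v).coeff (#s - 1) :=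
        (coeff_eq_sum hvs (degree_nodal_sub_nodal_lt v _)).symm
    _ = g * #s := by rw [coeff_nodal_sub_const_sub_nodal, mul_comm]

end Lagrange

/-- rational degeneration of the Liouville identity:
`∑_i ∏_{k ≠ i} (q_i - q_k + g)/(q_i - q_k) = M` for pairwise distinct real `q_i`. -/
theorem liouville_identity_rational (g : ℝ) (M : ℕ) (q : Fin M → ℝ)
    (hq : Function.Injective q) :
    ∑ i : Fin M, ∏ k ∈ Finset.univ.erase i, (q i - q k + g) / (q i - q k) = (M : ℝ) := by
  simpa using Lagrange.sum_prod_sub_add_div_sub hq.injOn (s := Finset.univ) g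
end

section
/- Under the folding identification q_{-i} = -q_i, θ_{-i} = -θ_i (for i = 1,...,N), q₀ = 0, q_{0̄} = T/2, θ₀ = θ_{0̄} = 0, the Hamiltonians K_l = ∑_{|I|=l} e^{-βθ_I} f_I and K_{-l} = ∑_{|I|=l} e^{βθ_I} f_I are equal, where f_I = ∏_{i∈I, k∉I} f(q_i - q_k)^{1/2}, using that f is even and T-periodic. -/
/-!
The folding map `σ`, exchanging the index `i` with `-i` and fixing `0` and `0̄`, is a permutation
of the index set with `θ ∘ σ = -θ` and `q ∘ σ ≡ -q` modulo the period `T` (only `q_{0̄} = T/2`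
needs the period). As `f^{1/2}` is even and `T`-periodic, every pair factor `f(q_i - q_k)^{1/2}`
is `σ`-invariant, so `I ↦ σ(I)` is a bijection of the `l`-subsets which preserves `f_I` and
negates `θ_I`; reindexing `K_l` along it gives `K_{-l}`.
-/

open Finset

section Hamiltonian

variable {ι A R : Type*} [Fintype ι]

theorem Finset.sum_powersetCard_map_equiv {M : Type*} [AddCommMonoid M] (e : ι ≃ ι) (l : ℕ)
    (G : Finset ι → M) :
    ∑ I ∈ powersetCard l univ, G (I.map e.toEmbedding) = ∑ I ∈ powersetCard l univ, G I := by
  conv_rhs => rw [← map_univ_equiv e, powersetCard_map, sum_map]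
  rfl

variable [DecidableEq ι] [AddCommGroup A] [CommSemiring R]

theorem Finset.map_compl_equiv (e : ι ≃ ι) (s : Finset ι) :
    (s.map e.toEmbedding)ᶜ = sᶜ.map e.toEmbedding := by
  rw [compl_eq_univ_sdiff, compl_eq_univ_sdiff, map_sdiff, map_univ_equiv]

/-- `∑_{|I| = l} F(Θ_I) ∏_{i ∈ I, k ∉ I} g i k`; the paper's `K_{±l}` is the case
`F = exp (∓β ·)`, `g i k = f(q_i - q_k)^{1/2}`. -/
def hamiltonian (F : A → R) (Θ : ι → A) (g : ι → ι → R) (l : ℕ) : R :=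
  ∑ I ∈ powersetCard l univ, F (∑ i ∈ I, Θ i) * ∏ i ∈ I, ∏ k ∈ Iᶜ, g i k

theorem hamiltonian_comp_neg (e : ι ≃ ι) (F : A → R) {Θ : ι → A} (hΘ : ∀ i, Θ (e i) = -Θ i)
    {g : ι → ι → R} (hg : ∀ i k, g (e i) (e k) = g i k) (l : ℕ) :
    hamiltonian (fun s => F (-s)) Θ g l = hamiltonian F Θ g l := by
  rw [hamiltonian, ← sum_powersetCard_map_equiv e]
  refine sum_congr rfl fun I _ => ?_
  simp only [map_compl_equiv, sum_map, prod_map, Equiv.coe_toEmbedding, hΘ, hg, sum_neg_distrib,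
    neg_neg]

end Hamiltonian

theorem Function.Periodic.eq_of_modEq {α β : Type*} [AddCommGroup α] {f : α → β} {c a b : α}
    (hf : Function.Periodic f c) (hab : a ≡ b [PMOD c]) : f a = f b := by
  obtain ⟨z, rfl⟩ := AddCommGroup.modEq_iff_eq_add_zsmul.1 hab
  exact (hf.zsmul z a).symm

def foldSwap {N : ℕ} : Fin N ⊕ Fin N ⊕ Bool → Fin N ⊕ Fin N ⊕ Bool
  | .inl i => .inr (.inl i)
  | .inr (.inl i) => .inl i
  | .inr (.inr b) => .inr (.inr b)

theorem foldSwap_involutive (N : ℕ) : Function.Involutive (foldSwap (N := N)) := by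
  rintro (i | i | b) <;> rfl

/-- `sqrtf` is the chosen branch of `f^{1/2}`; the indices `Sum.inl i`, `Sum.inr (Sum.inl i)`,
`Sum.inr (Sum.inr false)`, `Sum.inr (Sum.inr true)` stand for `i`, `-i`, `0`, `0̄`. -/
theorem folded_K_l_eq_K_neg_l_general (N l : ℕ) (β ν : ℂ)
    (q θ : Fin N → ℂ) (sqrtf : ℂ → ℂ)
    (heven : ∀ x, sqrtf (-x) = sqrtf x)
    (hper : ∀ x, sqrtf (x + 2 * (Real.pi : ℂ) * Complex.I / ν) = sqrtf x)
    (Q Θ : Fin N ⊕ Fin N ⊕ Bool → ℂ)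
    (hQ : ∀ i, Q (Sum.inl i) = q i)
    (hQ' : ∀ i, Q (Sum.inr (Sum.inl i)) = -q i)
    (hQ0 : Q (Sum.inr (Sum.inr false)) = 0)
    (hQb : Q (Sum.inr (Sum.inr true)) = (Real.pi : ℂ) * Complex.I / ν)
    (hΘ : ∀ i, Θ (Sum.inl i) = θ i)
    (hΘ' : ∀ i, Θ (Sum.inr (Sum.inl i)) = -θ i)
    (hΘ0 : Θ (Sum.inr (Sum.inr false)) = 0)
    (hΘb : Θ (Sum.inr (Sum.inr true)) = 0) :
    ∑ I ∈ (Finset.univ : Finset (Fin N ⊕ Fin N ⊕ Bool)).powersetCard l,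
        Complex.exp (-β * ∑ i ∈ I, Θ i) * ∏ i ∈ I, ∏ k ∈ Iᶜ, sqrtf (Q i - Q k) =
      ∑ I ∈ (Finset.univ : Finset (Fin N ⊕ Fin N ⊕ Bool)).powersetCard l,
        Complex.exp (β * ∑ i ∈ I, Θ i) * ∏ i ∈ I, ∏ k ∈ Iᶜ, sqrtf (Q i - Q k) := by
  let σ := (foldSwap_involutive N).toPerm
  have hΘσ : ∀ i, Θ (σ i) = -Θ i := by
    rintro (i | i | _ | _) <;> simp [σ, foldSwap, *]
  have hQσ : ∀ i, Q (σ i) ≡ -Q i [PMOD 2 * (Real.pi : ℂ) * Complex.I / ν] := by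
    rintro (i | i | _ | _)
    iterate 3 simp [σ, foldSwap, *]
    · refine AddCommGroup.modEq_iff_eq_add_zsmul.2 ⟨-1, ?_⟩
      change _ = Q (.inr (.inr true)) + _
      rw [hQb]
      ring
  have hfσ : ∀ i k, sqrtf (Q (σ i) - Q (σ k)) = sqrtf (Q i - Q k) := fun i k => by
    rw [Function.Periodic.eq_of_modEq hper ((hQσ i).sub (hQσ k)), neg_sub_neg, ← heven, neg_sub]
  have key := hamiltonian_comp_neg σ (fun s => Complex.exp (β * s)) hΘσ
    (g := fun i k => sqrtf (Q i - Q k)) hfσ l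
  simp only [mul_neg, ← neg_mul] at key
  exact key

/-- on the folded configuration (`q_{-i} = -q_i`, `θ_{-i} = -θ_i`,
`q₀ = 0`, `q_{0̄} = T/2`, `θ₀ = θ_{0̄} = 0`) the Hamiltonians
`K_l = ∑_{|I|=l} e^{-βθ_I} f_I` and `K_{-l} = ∑_{|I|=l} e^{βθ_I} f_I` coincide.
The index set `{-N,…,-1,0,0̄,1,…,N}` is modelled by `Fin N ⊕ Fin N ⊕ Bool`;
`sqrtf` is a consistent branch of `f^{1/2}` (even, `T`-periodic, with
`sqrtf x ^ 2 = f x` wherever `f` is defined). -/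
theorem folded_K_l_eq_K_neg_l (N l : ℕ) (β ν γ : ℂ) (hν : ν ≠ 0)
    (q θ : Fin N → ℂ) (sqrtf : ℂ → ℂ)
    (hsq : ∀ x : ℂ, Complex.sinh (ν * x / 2) ≠ 0 →
      sqrtf x ^ 2 = 1 - Complex.sinh γ ^ 2 / Complex.sinh (ν * x / 2) ^ 2)
    (heven : ∀ x, sqrtf (-x) = sqrtf x)
    (hper : ∀ x, sqrtf (x + 2 * (Real.pi : ℂ) * Complex.I / ν) = sqrtf x)
    (Q Θ : Fin N ⊕ Fin N ⊕ Bool → ℂ)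
    (hQ : ∀ i, Q (Sum.inl i) = q i)
    (hQ' : ∀ i, Q (Sum.inr (Sum.inl i)) = -q i)
    (hQ0 : Q (Sum.inr (Sum.inr false)) = 0)
    (hQb : Q (Sum.inr (Sum.inr true)) = (Real.pi : ℂ) * Complex.I / ν)
    (hΘ : ∀ i, Θ (Sum.inl i) = θ i)
    (hΘ' : ∀ i, Θ (Sum.inr (Sum.inl i)) = -θ i)
    (hΘ0 : Θ (Sum.inr (Sum.inr false)) = 0)
    (hΘb : Θ (Sum.inr (Sum.inr true)) = 0) :
    ∑ I ∈ (Finset.univ : Finset (Fin N ⊕ Fin N ⊕ Bool)).powersetCard l,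
        Complex.exp (-β * ∑ i ∈ I, Θ i) * ∏ i ∈ I, ∏ k ∈ Iᶜ, sqrtf (Q i - Q k) =
      ∑ I ∈ (Finset.univ : Finset (Fin N ⊕ Fin N ⊕ Bool)).powersetCard l,
        Complex.exp (β * ∑ i ∈ I, Θ i) * ∏ i ∈ I, ∏ k ∈ Iᶜ, sqrtf (Q i - Q k) :=
  folded_K_l_eq_K_neg_l_general N l β ν q θ sqrtf heven hper Q Θ hQ hQ' hQ0 hQb hΘ hΘ' hΘ0 hΘb
end

section
/- Product identity for folded potentials: with positions satisfying the folding relations (q_{-j} = −q_j etc.), one has V_{εJ;J^c} · V_{−εJ;J^c} = ∏_{j∈εJ} w_r(q_j) w_r(−q_j) · f_{εJ}², where V_{εJ;K} = ∏_{j∈εJ} w_r(q_j) ∏_{j∈εJ, k∈𝒜_K∪(−εJ)} v(q_j − q_k), f_{εJ} = ∏_{j∈εJ, k∉εJ} f(q_j − q_k)^{1/2}, and f(q) = v(q)v(−q). -/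
/-!
Let `σ` be the folding involution of the index set, exchanging `j` and `-j` and fixing `0`, `0̄`.
It maps `εJ` onto `-εJ`, and `𝒜_K ∪ (-εJ)` and `𝒜_K ∪ εJ` are the complements of `εJ` and `-εJ`.
Since `q_{σ k} = -q_k` up to the period `2πi/ν` of `v` (only `0̄` needs the period), reindexing
the second factor by `σ` turns `∏_{j ∈ -εJ, k ∉ -εJ} v(q_j - q_k)` into
`∏_{j ∈ εJ, k ∉ εJ} v(q_k - q_j)`, and the product of the two `v`-factors is `f_{εJ}²`.
-/

open Finset

/-- The function `v(q) = sinh(νq/2 + γ)/sinh(νq/2)`. -/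
noncomputable def vRS (ν γ x : ℂ) : ℂ :=
  Complex.sinh (ν * x / 2 + γ) / Complex.sinh (ν * x / 2)

lemma vRS_add_period (ν γ : ℂ) (hν : ν ≠ 0) (x : ℂ) :
    vRS ν γ (x + 2 * Real.pi * Complex.I / ν) = vRS ν γ x := by
  have h : ν * (x + 2 * Real.pi * Complex.I / ν) / 2 = ν * x / 2 + Real.pi * Complex.I := by
    field_simp
  rw [vRS, vRS, h, add_right_comm, Complex.sinh_add_pi_mul_I, Complex.sinh_add_pi_mul_I,
    neg_div_neg_eq]

lemma Finset.prod_image_prod_compl_image_of_involutive {α M : Type*} [Fintype α]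
    [DecidableEq α] [CommMonoid M] {σ : α → α} (hσ : Function.Involutive σ) (s : Finset α)
    (g : α → α → M) :
    ∏ j ∈ s.image σ, ∏ k ∈ (s.image σ)ᶜ, g j k = ∏ j ∈ s, ∏ k ∈ sᶜ, g (σ j) (σ k) := by
  have hcompl : (s.image σ)ᶜ = sᶜ.image σ := by
    ext k
    obtain ⟨k, rfl⟩ := hσ.surjective k
    simp only [mem_compl, hσ.injective.mem_finset_image]
  simp only [hcompl, prod_image hσ.injective.injOn]

lemma Finset.prod_prod_sq_eq_of_sq_eq {ι κ M : Type*} [CommMonoid M] (s : Finset ι)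
    (t : Finset κ) {r a b : ι → κ → M} (h : ∀ i k, r i k ^ 2 = a i k * b i k) :
    (∏ i ∈ s, ∏ k ∈ t, r i k) ^ 2 = (∏ i ∈ s, ∏ k ∈ t, a i k) * ∏ i ∈ s, ∏ k ∈ t, b i k := by
  simp only [← prod_pow, h, prod_mul_distrib]

section FoldedIndex

variable {N : ℕ}

def foldNeg : Fin N ⊕ Fin N ⊕ Bool → Fin N ⊕ Fin N ⊕ Bool
  | .inl j => .inr (.inl j)
  | .inr (.inl j) => .inl j
  | .inr (.inr b) => .inr (.inr b)

lemma foldNeg_involutive : Function.Involutive (foldNeg (N := N)) := by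
  rintro (j | j | b) <;> rfl

/-- `signedIndex b j` is `ε_j j` for the sign `ε_j = +1` if `b` and `-1` otherwise. -/
def signedIndex (b : Bool) (j : Fin N) : Fin N ⊕ Fin N ⊕ Bool :=
  if b then .inl j else .inr (.inl j)

lemma foldNeg_signedIndex (b : Bool) (j : Fin N) :
    foldNeg (signedIndex b j) = signedIndex (!b) j := by
  cases b <;> rfl

/-- `𝒜_K = K ∪ (-K) ∪ {0, 0̄}`. -/
def symmetricIndexSet (K : Finset (Fin N)) : Finset (Fin N ⊕ Fin N ⊕ Bool) :=
  K.image .inl ∪ K.image (fun k => .inr (.inl k)) ∪ {.inr (.inr false), .inr (.inr true)}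

variable (K : Finset (Fin N))

@[simp] lemma inl_mem_symmetricIndexSet (j : Fin N) : .inl j ∈ symmetricIndexSet K ↔ j ∈ K := by
  simp [symmetricIndexSet]

@[simp] lemma inr_inl_mem_symmetricIndexSet (j : Fin N) :
    .inr (.inl j) ∈ symmetricIndexSet K ↔ j ∈ K := by
  simp [symmetricIndexSet]

@[simp] lemma inr_inr_mem_symmetricIndexSet (c : Bool) : .inr (.inr c) ∈ symmetricIndexSet K := by
  cases c <;> simp [symmetricIndexSet]

variable (J : Finset (Fin N)) (F : Fin N → Bool)

@[simp] lemma inl_mem_image_signedIndex (j : Fin N) :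
    .inl j ∈ J.image (fun j => signedIndex (F j) j) ↔ j ∈ J ∧ F j = true := by
  refine ⟨fun h => ?_, fun ⟨hj, hF⟩ => mem_image.2 ⟨j, hj, by simp [signedIndex, hF]⟩⟩
  obtain ⟨a, ha, h⟩ := mem_image.1 h
  cases hF : F a <;> simp_all [signedIndex]

@[simp] lemma inr_inl_mem_image_signedIndex (j : Fin N) :
    .inr (.inl j) ∈ J.image (fun j => signedIndex (F j) j) ↔ j ∈ J ∧ F j = false := by
  refine ⟨fun h => ?_, fun ⟨hj, hF⟩ => mem_image.2 ⟨j, hj, by simp [signedIndex, hF]⟩⟩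
  obtain ⟨a, ha, h⟩ := mem_image.1 h
  cases hF : F a <;> simp_all [signedIndex]

@[simp] lemma inr_inr_notMem_image_signedIndex (c : Bool) :
    .inr (.inr c) ∉ J.image (fun j => signedIndex (F j) j) := by
  simp only [mem_image, not_exists, not_and]
  intro a _
  cases F a <;> simp [signedIndex]

lemma symmetricIndexSet_compl_union_image_signedIndex {G : Fin N → Bool}
    (hG : ∀ j, G j = !F j) :
    symmetricIndexSet Jᶜ ∪ J.image (fun j => signedIndex (G j) j) =
      (J.image (fun j => signedIndex (F j) j))ᶜ := by
  ext (j | j | c) <;> simp [hG, -mem_image] <;> tauto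

lemma image_signedIndex_image_foldNeg :
    (J.image (fun j => signedIndex (F j) j)).image foldNeg =
      J.image (fun j => signedIndex (!F j) j) := by
  simp only [image_image, Function.comp_def, foldNeg_signedIndex]

end FoldedIndex

section FoldedPositions

variable {N : ℕ} {ν γ : ℂ} {Q : Fin N ⊕ Fin N ⊕ Bool → ℂ}

lemma Q_foldNeg_of_mem_image_signedIndex (hQneg : ∀ i, Q (.inr (.inl i)) = -Q (.inl i))
    {J : Finset (Fin N)} {F : Fin N → Bool} {j : Fin N ⊕ Fin N ⊕ Bool}
    (hj : j ∈ J.image (fun j => signedIndex (F j) j)) :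
    Q (foldNeg j) = -Q j := by
  obtain ⟨a, -, rfl⟩ := mem_image.1 hj
  cases F a <;> simp [signedIndex, foldNeg, hQneg]

lemma vRS_sub_Q_foldNeg (hQneg : ∀ i, Q (.inr (.inl i)) = -Q (.inl i)) (hν : ν ≠ 0)
    (hQ0 : Q (.inr (.inr false)) = 0) (hQb : Q (.inr (.inr true)) = Real.pi * Complex.I / ν)
    (x : ℂ) (k : Fin N ⊕ Fin N ⊕ Bool) :
    vRS ν γ (x - Q (foldNeg k)) = vRS ν γ (x + Q k) := by
  rcases k with j | j | (_ | _)
  · simp [foldNeg, hQneg]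
  · simp [foldNeg, hQneg, sub_eq_add_neg]
  · simp [foldNeg, hQ0]
  · rw [← vRS_add_period ν γ hν]
    congr 1
    simp only [foldNeg, hQb]
    ring

end FoldedPositions

theorem folded_V_product_identity_general (N : ℕ) (ν γ : ℂ) (hν : ν ≠ 0)
    (q : Fin N → ℂ) (J : Finset (Fin N)) (E : Fin N → Bool)
    (wr sqrtf : ℂ → ℂ)
    (hsq : ∀ x, sqrtf x ^ 2 = vRS ν γ x * vRS ν γ (-x))
    (Q : Fin N ⊕ Fin N ⊕ Bool → ℂ)
    (hQ : ∀ i, Q (Sum.inl i) = q i)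
    (hQ' : ∀ i, Q (Sum.inr (Sum.inl i)) = -q i)
    (hQ0 : Q (Sum.inr (Sum.inr false)) = 0)
    (hQb : Q (Sum.inr (Sum.inr true)) = (Real.pi : ℂ) * Complex.I / ν)
    (εJ negεJ AK : Finset (Fin N ⊕ Fin N ⊕ Bool))
    (hεJ : εJ = J.image (fun j => if E j then Sum.inl j else Sum.inr (Sum.inl j)))
    (hnegεJ : negεJ =
      J.image (fun j => if E j then Sum.inr (Sum.inl j) else Sum.inl j))
    (hAK : AK = (Jᶜ).image Sum.inl ∪ (Jᶜ).image (fun k => Sum.inr (Sum.inl k)) ∪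
      {Sum.inr (Sum.inr false), Sum.inr (Sum.inr true)}) :
    ((∏ j ∈ εJ, wr (Q j)) * ∏ j ∈ εJ, ∏ k ∈ AK ∪ negεJ, vRS ν γ (Q j - Q k)) *
        ((∏ j ∈ negεJ, wr (Q j)) * ∏ j ∈ negεJ, ∏ k ∈ AK ∪ εJ, vRS ν γ (Q j - Q k)) =
      (∏ j ∈ εJ, wr (Q j) * wr (-Q j)) *
        (∏ j ∈ εJ, ∏ k ∈ εJᶜ, sqrtf (Q j - Q k)) ^ 2 := by
  have hQneg : ∀ i, Q (.inr (.inl i)) = -Q (.inl i) := fun i => by rw [hQ', hQ]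
  replace hεJ : εJ = J.image (fun j => signedIndex (E j) j) := hεJ
  replace hnegεJ : negεJ = J.image (fun j => signedIndex (!E j) j) := by
    rw [hnegεJ]
    exact image_congr fun j _ => by cases E j <;> rfl
  replace hAK : AK = symmetricIndexSet Jᶜ := hAK
  have hcompl : AK ∪ negεJ = εJᶜ := by
    rw [hnegεJ, hεJ, hAK]
    exact symmetricIndexSet_compl_union_image_signedIndex J E fun _ => rfl
  have hcompl' : AK ∪ εJ = negεJᶜ := by
    rw [hnegεJ, hεJ, hAK]
    exact symmetricIndexSet_compl_union_image_signedIndex J _ fun _ => (Bool.not_not _).symm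
  have hfold : negεJ = εJ.image foldNeg := by
    rw [hnegεJ, hεJ, image_signedIndex_image_foldNeg]
  have hQfold : ∀ j ∈ εJ, Q (foldNeg j) = -Q j := fun j hj =>
    Q_foldNeg_of_mem_image_signedIndex hQneg (hεJ ▸ hj)
  have hvfold : ∀ j ∈ εJ, ∀ k ∈ εJᶜ,
      vRS ν γ (Q (foldNeg j) - Q (foldNeg k)) = vRS ν γ (-(Q j - Q k)) := by
    intro j hj k _
    rw [hQfold j hj, vRS_sub_Q_foldNeg hQneg hν hQ0 hQb, neg_sub, neg_add_eq_sub]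
  rw [hcompl, hcompl', hfold, prod_image foldNeg_involutive.injective.injOn,
    prod_image_prod_compl_image_of_involutive foldNeg_involutive,
    prod_prod_sq_eq_of_sq_eq _ _ (fun j k => hsq (Q j - Q k)), prod_mul_distrib,
    prod_congr rfl fun j hj => congrArg wr (hQfold j hj),
    prod_congr rfl fun j hj => prod_congr rfl (hvfold j hj)]
  ring

/-- product identity for folded potentials:
`V_{εJ;J^c} · V_{−εJ;J^c} = ∏_{j∈εJ} w_r(q_j) w_r(−q_j) · f_{εJ}²`.
The index set `{−N,…,−1,0,0̄,1,…,N}` is modelled by `Fin N ⊕ Fin N ⊕ Bool`,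
with folded positions `q_{-i} = −q_i`, `q₀ = 0`, `q_{0̄} = T/2 = πi/ν`.
The sign choice `ε ∈ {±1}^J` is encoded by `E : Fin N → Bool` (`E j = true`
meaning `ε_j = +1`); `εJ`, `−εJ` and `𝒜_K` (`K = J^c`) are the corresponding
subsets, and `f_{εJ} = ∏_{j∈εJ, k∉εJ} f(q_j − q_k)^{1/2}` is built from a
consistent square root `sqrtf` of `f = v(q)v(−q)`. -/
theorem folded_V_product_identity (N : ℕ) (ν γ : ℂ) (hν : ν ≠ 0)
    (q : Fin N → ℂ) (J : Finset (Fin N)) (E : Fin N → Bool)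
    (wr sqrtf : ℂ → ℂ)
    (hsq : ∀ x, sqrtf x ^ 2 = vRS ν γ x * vRS ν γ (-x))
    (Q : Fin N ⊕ Fin N ⊕ Bool → ℂ)
    (hQ : ∀ i, Q (Sum.inl i) = q i)
    (hQ' : ∀ i, Q (Sum.inr (Sum.inl i)) = -q i)
    (hQ0 : Q (Sum.inr (Sum.inr false)) = 0)
    (hQb : Q (Sum.inr (Sum.inr true)) = (Real.pi : ℂ) * Complex.I / ν)
    (hreg : ∀ i k : Fin N ⊕ Fin N ⊕ Bool, i ≠ k →
      Complex.sinh (ν * (Q i - Q k) / 2) ≠ 0)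
    (εJ negεJ AK : Finset (Fin N ⊕ Fin N ⊕ Bool))
    (hεJ : εJ = J.image (fun j => if E j then Sum.inl j else Sum.inr (Sum.inl j)))
    (hnegεJ : negεJ =
      J.image (fun j => if E j then Sum.inr (Sum.inl j) else Sum.inl j))
    (hAK : AK = (Jᶜ).image Sum.inl ∪ (Jᶜ).image (fun k => Sum.inr (Sum.inl k)) ∪
      {Sum.inr (Sum.inr false), Sum.inr (Sum.inr true)}) :
    ((∏ j ∈ εJ, wr (Q j)) * ∏ j ∈ εJ, ∏ k ∈ AK ∪ negεJ, vRS ν γ (Q j - Q k)) *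
        ((∏ j ∈ negεJ, wr (Q j)) * ∏ j ∈ negεJ, ∏ k ∈ AK ∪ εJ, vRS ν γ (Q j - Q k)) =
      (∏ j ∈ εJ, wr (Q j) * wr (-Q j)) *
        (∏ j ∈ εJ, ∏ k ∈ εJᶜ, sqrtf (Q j - Q k)) ^ 2 :=
  folded_V_product_identity_general N ν γ hν q J E wr sqrtf hsq Q hQ hQ' hQ0 hQb εJ negεJ AK hεJ
    hnegεJ hAK
end
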